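/- arXiv:2105.09224 — 3 statements merged into one kernel-verified Lean document; each statement's English description precedes it below -/
import Mathlib

section
/- Let S be nearly epsilon-strongly G-graded and I an ideal of S_e. Then: (a) I S_y = S_y I^y and S_{y^{-1}} I = I^y S_{y^{-1}} for every y ∈ G; (b) if H is a subgroup of G and I is H-invariant, then I S_y = S_y I for every y ∈ H. -/
open Pointwise

/-- The product `UV` of two subsets of a ring: the additive subgroup consisting of all
finite sums of products `u * v` with `u ∈ U`, `v ∈ V`. -/
def setProd {S : Type*} [NonUnitalRing S] (U V : Set S) : AddSubgroup S :=
  AddSubgroup.closure (U * V)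

/-- For a `G`-graded ring with components `𝒮` and a subset `I ⊆ S`, the subset
`I^x := S_{x⁻¹} I S_x` (finite sums of triple products). -/
def gradedConj {G : Type*} [Group G] {S : Type*} [NonUnitalRing S]
    (𝒮 : G → AddSubgroup S) (I : Set S) (x : G) : AddSubgroup S :=
  setProd ((setProd (𝒮 x⁻¹ : Set S) I : AddSubgroup S) : Set S) (𝒮 x : Set S)

/-- `I` is a (two-sided) ideal of the subring `T` of `S`. -/
def IsIdealOfComponent {S : Type*} [NonUnitalRing S] (T : AddSubgroup S)
    (I : AddSubgroup S) : Prop :=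
  I ≤ T ∧ ∀ a ∈ T, ∀ b ∈ I, a * b ∈ I ∧ b * a ∈ I

/-! Both identities of (a) come from the associativity of the product of subsets together
with two facts: `S_y S_{y⁻¹} ⊆ S_e` is absorbed by the ideal `I` on either side, and every
element of `S_y` has a left unit in `S_y S_{y⁻¹}` (every element of `S_{y⁻¹}` a right unit).
Thus `I S_y = (S_y S_{y⁻¹}) I S_y = S_y I^y`, and symmetrically on the other side.
Part (b) follows by combining (a) for `y` and for `y⁻¹` with `I^y, I^{y⁻¹} ⊆ I`. -/

section SetProd

variable {S : Type*} [NonUnitalRing S]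

lemma mul_mem_setProd {U V : Set S} {u v : S} (hu : u ∈ U) (hv : v ∈ V) :
    u * v ∈ setProd U V :=
  AddSubgroup.subset_closure (Set.mul_mem_mul hu hv)

lemma setProd_le {U V : Set S} {P : AddSubgroup S}
    (h : ∀ u ∈ U, ∀ v ∈ V, u * v ∈ P) : setProd U V ≤ P := by
  rw [setProd, AddSubgroup.closure_le]
  rintro _ ⟨u, hu, v, hv, rfl⟩
  exact h u hu v hv

lemma setProd_mono {U U' V V' : Set S} (hU : U ⊆ U') (hV : V ⊆ V') :
    setProd U V ≤ setProd U' V' :=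
  setProd_le fun _ hu _ hv => mul_mem_setProd (hU hu) (hV hv)

lemma setProd_closure_left (X V : Set S) :
    setProd (AddSubgroup.closure X : Set S) V = setProd X V := by
  refine le_antisymm (setProd_le fun t ht v hv => ?_)
    (setProd_mono AddSubgroup.subset_closure subset_rfl)
  induction ht using AddSubgroup.closure_induction with
  | mem x hx => exact mul_mem_setProd hx hv
  | zero => simp
  | add x y _ _ hx hy => simpa [add_mul] using add_mem hx hy
  | neg x _ hx => simpa [neg_mul] using neg_mem hx

lemma setProd_closure_right (U X : Set S) :
    setProd U (AddSubgroup.closure X : Set S) = setProd U X := by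
  refine le_antisymm (setProd_le fun u hu t ht => ?_)
    (setProd_mono subset_rfl AddSubgroup.subset_closure)
  induction ht using AddSubgroup.closure_induction with
  | mem x hx => exact mul_mem_setProd hu hx
  | zero => simp
  | add x y _ _ hx hy => simpa [mul_add] using add_mem hx hy
  | neg x _ hx => simpa [mul_neg] using neg_mem hx

lemma setProd_assoc (U V W : Set S) :
    setProd (setProd U V : Set S) W = setProd U (setProd V W : Set S) := by
  calc setProd (setProd U V : Set S) W = setProd (U * V) W := setProd_closure_left _ _
    _ = setProd U (V * W) := by rw [setProd, setProd, mul_assoc]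
    _ = setProd U (setProd V W : Set S) := (setProd_closure_right _ _).symm

lemma le_setProd_of_leftUnit {E : Set S} {P : AddSubgroup S}
    (h : ∀ p ∈ P, ∃ e ∈ E, e * p = p) : P ≤ setProd E P := fun p hp => by
  obtain ⟨e, he, hep⟩ := h p hp
  exact hep ▸ mul_mem_setProd he hp

lemma le_setProd_of_rightUnit {E : Set S} {P : AddSubgroup S}
    (h : ∀ p ∈ P, ∃ e ∈ E, p * e = p) : P ≤ setProd P E := fun p hp => by
  obtain ⟨e, he, hpe⟩ := h p hp
  exact hpe ▸ mul_mem_setProd hp he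

lemma IsIdealOfComponent.setProd_left_le {T I : AddSubgroup S} (hI : IsIdealOfComponent T I)
    {U : Set S} (hU : U ⊆ T) : setProd U I ≤ I :=
  setProd_le fun _ hu _ hb => (hI.2 _ (hU hu) _ hb).1

lemma IsIdealOfComponent.setProd_right_le {T I : AddSubgroup S} (hI : IsIdealOfComponent T I)
    {U : Set S} (hU : U ⊆ T) : setProd I U ≤ I :=
  setProd_le fun _ hb _ hu => (hI.2 _ (hU hu) _ hb).2

end SetProd

section Graded

variable {G : Type*} [Group G] {S : Type*} [NonUnitalRing S] {𝒮 : G → AddSubgroup S}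
  {I : AddSubgroup S} {y : G}

lemma setProd_component_le
    (hmul : ∀ {x y : G} {a b : S}, a ∈ 𝒮 x → b ∈ 𝒮 y → a * b ∈ 𝒮 (x * y)) (x z : G) :
    setProd (𝒮 x : Set S) (𝒮 z : Set S) ≤ 𝒮 (x * z) :=
  setProd_le fun _ ha _ hb => hmul ha hb

lemma setProd_ideal_component_eq
    (hmul : ∀ {x y : G} {a b : S}, a ∈ 𝒮 x → b ∈ 𝒮 y → a * b ∈ 𝒮 (x * y))
    (hunit : ∀ s ∈ 𝒮 y, ∃ ε ∈ setProd (𝒮 y : Set S) (𝒮 y⁻¹ : Set S), ε * s = s)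
    (hI : IsIdealOfComponent (𝒮 1) I) :
    setProd (I : Set S) (𝒮 y : Set S) =
      setProd (𝒮 y : Set S) (gradedConj 𝒮 (I : Set S) y : Set S) := by
  have hunits : setProd (𝒮 y : Set S) (𝒮 y⁻¹ : Set S) ≤ 𝒮 1 := by
    simpa only [mul_inv_cancel] using setProd_component_le hmul y y⁻¹
  have hIy : setProd (I : Set S) (𝒮 y : Set S) ≤ 𝒮 y :=
    (setProd_mono hI.1 subset_rfl).trans
      (by simpa only [one_mul] using setProd_component_le hmul 1 y)
  have hswap : setProd (𝒮 y : Set S) (gradedConj 𝒮 (I : Set S) y : Set S) =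
      setProd (setProd (setProd (𝒮 y : Set S) (𝒮 y⁻¹ : Set S) : Set S) I : Set S)
        (𝒮 y : Set S) := by
    simp only [gradedConj, setProd_assoc]
  refine le_antisymm ?_ (hswap.trans_le (setProd_mono (hI.setProd_left_le hunits) subset_rfl))
  calc setProd (I : Set S) (𝒮 y : Set S)
      ≤ setProd (setProd (𝒮 y : Set S) (𝒮 y⁻¹ : Set S) : Set S)
          (setProd (I : Set S) (𝒮 y : Set S) : Set S) :=
        le_setProd_of_leftUnit fun p hp => hunit p (hIy hp)
    _ = setProd (𝒮 y : Set S) (gradedConj 𝒮 (I : Set S) y : Set S) := by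
        simp only [gradedConj, setProd_assoc]

lemma setProd_component_inv_ideal_eq
    (hmul : ∀ {x y : G} {a b : S}, a ∈ 𝒮 x → b ∈ 𝒮 y → a * b ∈ 𝒮 (x * y))
    (hunit : ∀ s ∈ 𝒮 y⁻¹, ∃ ε ∈ setProd (𝒮 y : Set S) (𝒮 y⁻¹ : Set S), s * ε = s)
    (hI : IsIdealOfComponent (𝒮 1) I) :
    setProd (𝒮 y⁻¹ : Set S) (I : Set S) =
      setProd (gradedConj 𝒮 (I : Set S) y : Set S) (𝒮 y⁻¹ : Set S) := by
  have hunits : setProd (𝒮 y : Set S) (𝒮 y⁻¹ : Set S) ≤ 𝒮 1 := by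
    simpa only [mul_inv_cancel] using setProd_component_le hmul y y⁻¹
  have hIy : setProd (𝒮 y⁻¹ : Set S) (I : Set S) ≤ 𝒮 y⁻¹ :=
    (setProd_mono subset_rfl hI.1).trans
      (by simpa only [mul_one] using setProd_component_le hmul y⁻¹ 1)
  have hswap : setProd (gradedConj 𝒮 (I : Set S) y : Set S) (𝒮 y⁻¹ : Set S) =
      setProd (𝒮 y⁻¹ : Set S)
        (setProd I (setProd (𝒮 y : Set S) (𝒮 y⁻¹ : Set S) : Set S) : Set S) := by
    simp only [gradedConj, setProd_assoc]
  refine le_antisymm ?_ (hswap.trans_le (setProd_mono subset_rfl (hI.setProd_right_le hunits)))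
  calc setProd (𝒮 y⁻¹ : Set S) (I : Set S)
      ≤ setProd (setProd (𝒮 y⁻¹ : Set S) (I : Set S) : Set S)
          (setProd (𝒮 y : Set S) (𝒮 y⁻¹ : Set S) : Set S) :=
        le_setProd_of_rightUnit fun p hp => hunit p (hIy hp)
    _ = setProd (gradedConj 𝒮 (I : Set S) y : Set S) (𝒮 y⁻¹ : Set S) := by
        simp only [gradedConj, setProd_assoc]

end Graded

theorem ideal_switch_general {G : Type*} [Group G]
    {S : Type*} [NonUnitalRing S] (𝒮 : G → AddSubgroup S)
    (hmul : ∀ {x y : G} {a b : S}, a ∈ 𝒮 x → b ∈ 𝒮 y → a * b ∈ 𝒮 (x * y))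
    (hnes : ∀ x : G, ∀ s ∈ 𝒮 x,
      (∃ ε ∈ setProd (𝒮 x : Set S) (𝒮 x⁻¹ : Set S), ε * s = s) ∧
      (∃ ε' ∈ setProd (𝒮 x⁻¹ : Set S) (𝒮 x : Set S), s * ε' = s))
    (I : AddSubgroup S) (hI : IsIdealOfComponent (𝒮 (1 : G)) I) :
    (∀ y : G,
      setProd (I : Set S) (𝒮 y : Set S) =
        setProd (𝒮 y : Set S) ((gradedConj 𝒮 (I : Set S) y : AddSubgroup S) : Set S) ∧
      setProd (𝒮 y⁻¹ : Set S) (I : Set S) =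
        setProd ((gradedConj 𝒮 (I : Set S) y : AddSubgroup S) : Set S) (𝒮 y⁻¹ : Set S)) ∧
    (∀ H : Subgroup G, (∀ x ∈ H, (gradedConj 𝒮 (I : Set S) x : Set S) ⊆ I) →
      ∀ y ∈ H, setProd (I : Set S) (𝒮 y : Set S) = setProd (𝒮 y : Set S) (I : Set S)) := by
  have left (y : G) := setProd_ideal_component_eq hmul (fun s hs => (hnes y s hs).1) hI
  have right (y : G) := setProd_component_inv_ideal_eq hmul
    (fun s hs => by simpa only [inv_inv] using (hnes y⁻¹ s hs).2) hI
  refine ⟨fun y => ⟨left y, right y⟩, fun H hinv y hy => le_antisymm ?_ ?_⟩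
  · exact (left y).trans_le (setProd_mono subset_rfl (hinv y hy))
  · have h := right y⁻¹
    rw [inv_inv] at h
    exact h.trans_le (setProd_mono (hinv y⁻¹ (H.inv_mem hy)) subset_rfl)

/-- Let `S` be nearly epsilon-strongly `G`-graded and `I` an ideal of `S_e`. Then:
(a) `I S_y = S_y I^y` and `S_{y⁻¹} I = I^y S_{y⁻¹}` for every `y ∈ G`;
(b) if `H` is a subgroup of `G` and `I` is `H`-invariant, then `I S_y = S_y I` for every
`y ∈ H`. -/
theorem ideal_switch {G : Type*} [Group G] [DecidableEq G]
    {S : Type*} [NonUnitalRing S] (𝒮 : G → AddSubgroup S)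
    [DirectSum.Decomposition 𝒮]
    (hmul : ∀ {x y : G} {a b : S}, a ∈ 𝒮 x → b ∈ 𝒮 y → a * b ∈ 𝒮 (x * y))
    (hnes : ∀ x : G, ∀ s ∈ 𝒮 x,
      (∃ ε ∈ setProd (𝒮 x : Set S) (𝒮 x⁻¹ : Set S), ε * s = s) ∧
      (∃ ε' ∈ setProd (𝒮 x⁻¹ : Set S) (𝒮 x : Set S), s * ε' = s))
    (I : AddSubgroup S) (hI : IsIdealOfComponent (𝒮 (1 : G)) I) :
    (∀ y : G,
      setProd (I : Set S) (𝒮 y : Set S) =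
        setProd (𝒮 y : Set S) ((gradedConj 𝒮 (I : Set S) y : AddSubgroup S) : Set S) ∧
      setProd (𝒮 y⁻¹ : Set S) (I : Set S) =
        setProd ((gradedConj 𝒮 (I : Set S) y : AddSubgroup S) : Set S) (𝒮 y⁻¹ : Set S)) ∧
    (∀ H : Subgroup G, (∀ x ∈ H, (gradedConj 𝒮 (I : Set S) x : Set S) ⊆ I) →
      ∀ y ∈ H, setProd (I : Set S) (𝒮 y : Set S) = setProd (𝒮 y : Set S) (I : Set S)) :=
  ideal_switch_general 𝒮 hmul hnes I hI
end

section
/- Let S be nearly epsilon-strongly G-graded. The map I ↦ I ∩ S_e is a bijection from the set of graded ideals of S onto the set of G-invariant ideals of S_e, with inverse J ↦ SJS. In particular, for any graded ideal I one has S(I ∩ S_e)S = S(I ∩ S_e) = (I ∩ S_e)S = I. -/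
open Pointwise

/-- For a two-sided ideal `J` of `S_e`, the set `SJS` (finite sums of products `s j t`). -/
def SJS {S : Type*} [NonUnitalRing S] (J : Set S) : AddSubgroup S :=
  setProd ((setProd (Set.univ : Set S) J : AddSubgroup S) : Set S) (Set.univ : Set S)

/-! Everything rests on s-unitality: a homogeneous `s ∈ S_x` equals `εs` with
`ε ∈ S_x S_{x⁻¹}`, so `s ∈ S (S_{x⁻¹} s)`, and `S_{x⁻¹} s ⊆ I ∩ S_e` when `s ∈ I`;
symmetrically on the right. A graded ideal is the sum of its homogeneous parts, whence
`I = S(I ∩ S_e) = (I ∩ S_e)S = S(I ∩ S_e)S`. Conversely `SJS` is spanned by the homogeneous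
products `u j t`, so it is graded, and such a product has degree `e` only if `u ∈ S_x` and
`t ∈ S_{x⁻¹}`, in which case it lies in `J` by `G`-invariance. -/

open Set

section SetProd

variable {S : Type*} [NonUnitalRing S]

theorem mul_mem_setProd_s17 {A B : Set S} {a b : S} (ha : a ∈ A) (hb : b ∈ B) :
    a * b ∈ setProd A B :=
  AddSubgroup.subset_closure (mul_mem_mul ha hb)

theorem setProd_le_s17 {A B : Set S} {K : AddSubgroup S} (h : ∀ a ∈ A, ∀ b ∈ B, a * b ∈ K) :
    setProd A B ≤ K :=
  (AddSubgroup.closure_le K).2 (mul_subset_iff.2 h)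

theorem setProd_mono_s17 {A A' B B' : Set S} (hA : A ⊆ A') (hB : B ⊆ B') :
    setProd A B ≤ setProd A' B' :=
  AddSubgroup.closure_mono (mul_subset_mul hA hB)

theorem mul_right_mem_of_mem_setProd {A B : Set S} {K : AddSubgroup S} {e c : S}
    (h : ∀ a ∈ A, ∀ b ∈ B, a * b * c ∈ K) (he : e ∈ setProd A B) : e * c ∈ K :=
  setProd_le_s17 (K := K.comap (AddMonoidHom.mulRight c)) h he

theorem mul_left_mem_of_mem_setProd {A B : Set S} {K : AddSubgroup S} {e c : S}
    (h : ∀ a ∈ A, ∀ b ∈ B, c * (a * b) ∈ K) (he : e ∈ setProd A B) : c * e ∈ K :=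
  setProd_le_s17 (K := K.comap (AddMonoidHom.mulLeft c)) h he

theorem setProd_setProd_le {A B C : Set S} {K : AddSubgroup S}
    (h : ∀ a ∈ A, ∀ b ∈ B, ∀ c ∈ C, a * b * c ∈ K) :
    setProd (setProd A B : Set S) C ≤ K :=
  setProd_le_s17 fun _ he c hc =>
    mul_right_mem_of_mem_setProd (fun a ha b hb => h a ha b hb c hc) he

theorem mul_mul_mem_SJS {J : Set S} {j : S} (u t : S) (hj : j ∈ J) : u * j * t ∈ SJS J :=
  mul_mem_setProd_s17 (mul_mem_setProd_s17 (mem_univ u) hj) (mem_univ t)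

theorem SJS_le {J : Set S} {K : AddSubgroup S} (h : ∀ u, ∀ j ∈ J, ∀ t, u * j * t ∈ K) :
    SJS J ≤ K :=
  setProd_setProd_le fun u _ j hj t _ => h u j hj t

theorem setProd_univ_le_SJS {J : Set S} (hJ : J ⊆ setProd univ J) :
    setProd J univ ≤ SJS J :=
  setProd_mono_s17 hJ subset_rfl

def IsTwoSidedIdeal (I : AddSubgroup S) : Prop :=
  ∀ s, ∀ a ∈ I, s * a ∈ I ∧ a * s ∈ I

theorem isTwoSidedIdeal_SJS (J : Set S) : IsTwoSidedIdeal (SJS J) := by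
  refine fun s a ha => ⟨?_, ?_⟩
  · refine SJS_le (K := (SJS J).comap (AddMonoidHom.mulLeft s)) (fun u j hj t => ?_) ha
    simpa only [AddSubgroup.mem_comap, AddMonoidHom.coe_mulLeft, ← mul_assoc]
      using mul_mul_mem_SJS (s * u) t hj
  · refine SJS_le (K := (SJS J).comap (AddMonoidHom.mulRight s)) (fun u j hj t => ?_) ha
    simpa only [AddSubgroup.mem_comap, AddMonoidHom.coe_mulRight, mul_assoc]
      using mul_mul_mem_SJS u (t * s) hj

theorem IsTwoSidedIdeal.univ_setProd_le {I : AddSubgroup S} (hI : IsTwoSidedIdeal I) {J : Set S}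
    (hJ : J ⊆ I) : setProd univ J ≤ I :=
  setProd_le_s17 fun u _ j hj => (hI u j (hJ hj)).1

theorem IsTwoSidedIdeal.setProd_univ_le {I : AddSubgroup S} (hI : IsTwoSidedIdeal I) {J : Set S}
    (hJ : J ⊆ I) : setProd J univ ≤ I :=
  setProd_le_s17 fun j hj u _ => (hI u j (hJ hj)).2

theorem IsTwoSidedIdeal.SJS_le_of_subset {I : AddSubgroup S} (hI : IsTwoSidedIdeal I) {J : Set S}
    (hJ : J ⊆ I) : SJS J ≤ I :=
  SJS_le fun u j hj t => (hI t _ (hI u j (hJ hj)).1).2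

theorem IsTwoSidedIdeal.isIdealOfComponent_inf {I T : AddSubgroup S} (hI : IsTwoSidedIdeal I)
    (hT : ∀ a ∈ T, ∀ b ∈ T, a * b ∈ T) : IsIdealOfComponent T (I ⊓ T) :=
  ⟨inf_le_right, fun a ha b hb =>
    ⟨⟨(hI a b hb.1).1, hT a ha b hb.2⟩, ⟨(hI a b hb.1).2, hT b hb.2 a ha⟩⟩⟩

end SetProd

section Graded

variable {G : Type*} [Group G] {S : Type*} [NonUnitalRing S]

def IsGradedMul (𝒮 : G → AddSubgroup S) : Prop :=
  ∀ {x y : G} {a b : S}, a ∈ 𝒮 x → b ∈ 𝒮 y → a * b ∈ 𝒮 (x * y)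

def IsNearlyEpsilonStrong (𝒮 : G → AddSubgroup S) : Prop :=
  ∀ x : G, ∀ s ∈ 𝒮 x,
    (∃ ε ∈ setProd (𝒮 x : Set S) (𝒮 x⁻¹ : Set S), ε * s = s) ∧
    (∃ ε' ∈ setProd (𝒮 x⁻¹ : Set S) (𝒮 x : Set S), s * ε' = s)

variable {𝒮 : G → AddSubgroup S}

theorem IsGradedMul.mul_mem_of_mul_eq (hmul : IsGradedMul 𝒮) {x y z : G} {a b : S}
    (ha : a ∈ 𝒮 x) (hb : b ∈ 𝒮 y) (hxy : x * y = z) : a * b ∈ 𝒮 z :=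
  hxy ▸ hmul ha hb

theorem IsNearlyEpsilonStrong.mem_univ_setProd (hnes : IsNearlyEpsilonStrong 𝒮) {x : G} {s : S}
    (hs : s ∈ 𝒮 x) {K : Set S} (hK : ∀ v ∈ 𝒮 x⁻¹, v * s ∈ K) : s ∈ setProd univ K := by
  obtain ⟨⟨ε, hε, hεs⟩, -⟩ := hnes x s hs
  rw [← hεs]
  refine mul_right_mem_of_mem_setProd (fun u _ v hv => ?_) hε
  rw [mul_assoc]
  exact mul_mem_setProd_s17 (mem_univ u) (hK v hv)

theorem IsNearlyEpsilonStrong.mem_setProd_univ (hnes : IsNearlyEpsilonStrong 𝒮) {x : G} {s : S}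
    (hs : s ∈ 𝒮 x) {K : Set S} (hK : ∀ v ∈ 𝒮 x⁻¹, s * v ∈ K) : s ∈ setProd K univ := by
  obtain ⟨-, ⟨ε, hε, hεs⟩⟩ := hnes x s hs
  rw [← hεs]
  refine mul_left_mem_of_mem_setProd (fun u hu v _ => ?_) hε
  rw [← mul_assoc]
  exact mul_mem_setProd_s17 (hK u hu) (mem_univ v)

theorem IsTwoSidedIdeal.gradedConj_inf_le (hmul : IsGradedMul 𝒮) {I : AddSubgroup S}
    (hI : IsTwoSidedIdeal I) (x : G) :
    gradedConj 𝒮 (I ⊓ 𝒮 1 : AddSubgroup S) x ≤ I ⊓ 𝒮 1 :=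
  setProd_setProd_le fun u hu j hj t ht =>
    ⟨(hI t _ (hI u j hj.1).1).2,
      hmul.mul_mem_of_mul_eq (hmul.mul_mem_of_mul_eq hu hj.2 (mul_one _)) ht (inv_mul_cancel x)⟩

theorem IsNearlyEpsilonStrong.subset_SJS (hnes : IsNearlyEpsilonStrong 𝒮) {J : AddSubgroup S}
    (hJ : IsIdealOfComponent (𝒮 1) J) : (J : Set S) ⊆ SJS (J : Set S) := by
  have hunit {v} (hv : v ∈ 𝒮 (1 : G)⁻¹) : v ∈ 𝒮 1 := by rwa [inv_one] at hv
  refine fun j hj => setProd_univ_le_SJS (fun k hk => ?_) ?_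
  · exact hnes.mem_univ_setProd (hJ.1 hk) fun v hv => (hJ.2 v (hunit hv) k hk).1
  · exact hnes.mem_setProd_univ (hJ.1 hj) fun v hv => (hJ.2 v (hunit hv) j hj).2

end Graded

section Homogeneous

open DirectSum

variable {ι : Type*} [DecidableEq ι]

section AddCommGroup

variable {M : Type*} [AddCommGroup M] {ℳ : ι → AddSubgroup M} [Decomposition ℳ]

variable (ℳ) in
def gradedProj (i : ι) : M →+ M :=
  (ℳ i).subtype.comp ((DFinsupp.evalAddMonoidHom i).comp (decomposeAddEquiv ℳ).toAddMonoidHom)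

theorem gradedProj_apply (i : ι) (a : M) : gradedProj ℳ i a = (decompose ℳ a i : M) :=
  rfl

theorem gradedProj_mem_of_mem {K : AddSubgroup M} {i j : ι} {a : M} (ha : a ∈ ℳ j)
    (hK : j = i → a ∈ K) : gradedProj ℳ i a ∈ K := by
  rw [gradedProj_apply]
  by_cases hji : j = i
  · subst hji
    rw [decompose_of_mem_same ℳ ha]
    exact hK rfl
  · rw [decompose_of_mem_ne ℳ ha hji]
    exact zero_mem K

theorem le_of_forall_homogeneous_mem {I K : AddSubgroup M} (hI : SetLike.IsHomogeneous ℳ I)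
    (h : ∀ i, ∀ a ∈ I, a ∈ ℳ i → a ∈ K) : I ≤ K := by
  classical
  intro a ha
  rw [← sum_support_decompose ℳ a]
  exact sum_mem fun i _ => h i _ (hI i ha) (SetLike.coe_mem _)

end AddCommGroup

variable {S : Type*} [NonUnitalRing S] {𝒮 : ι → AddSubgroup S} [Decomposition 𝒮]

variable (𝒮) in
theorem mul_mul_mem_of_forall_homogeneous {K : AddSubgroup S} {j : S}
    (h : ∀ y z, ∀ u ∈ 𝒮 y, ∀ t ∈ 𝒮 z, u * j * t ∈ K) (u t : S) :
    u * j * t ∈ K := by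
  induction u using Decomposition.inductionOn 𝒮 generalizing t with
  | zero => simp
  | homogeneous u =>
    induction t using Decomposition.inductionOn 𝒮 with
    | zero => simp
    | homogeneous t => exact h _ _ u u.2 t t.2
    | add t t' ht ht' => rw [mul_add]; exact add_mem ht ht'
  | add u u' hu hu' => rw [add_mul, add_mul]; exact add_mem (hu t) (hu' t)

end Homogeneous

section GradedIdeals

open DirectSum

variable {G : Type*} [Group G] [DecidableEq G] {S : Type*} [NonUnitalRing S]
  {𝒮 : G → AddSubgroup S} [Decomposition 𝒮]

namespace IsTwoSidedIdeal

variable {I : AddSubgroup S}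

theorem le_univ_setProd_inf (hmul : IsGradedMul 𝒮) (hnes : IsNearlyEpsilonStrong 𝒮)
    (hI : IsTwoSidedIdeal I) (hIh : SetLike.IsHomogeneous 𝒮 I) :
    I ≤ setProd univ (I ⊓ 𝒮 1 : AddSubgroup S) :=
  le_of_forall_homogeneous_mem hIh fun x c hc hcx =>
    hnes.mem_univ_setProd hcx fun v hv =>
      ⟨(hI v c hc).1, hmul.mul_mem_of_mul_eq hv hcx (inv_mul_cancel x)⟩

theorem le_setProd_inf_univ (hmul : IsGradedMul 𝒮) (hnes : IsNearlyEpsilonStrong 𝒮)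
    (hI : IsTwoSidedIdeal I) (hIh : SetLike.IsHomogeneous 𝒮 I) :
    I ≤ setProd (I ⊓ 𝒮 1 : AddSubgroup S) univ :=
  le_of_forall_homogeneous_mem hIh fun x c hc hcx =>
    hnes.mem_setProd_univ hcx fun v hv =>
      ⟨(hI v c hc).2, hmul.mul_mem_of_mul_eq hcx hv (mul_inv_cancel x)⟩

theorem univ_setProd_inf_eq (hmul : IsGradedMul 𝒮) (hnes : IsNearlyEpsilonStrong 𝒮)
    (hI : IsTwoSidedIdeal I) (hIh : SetLike.IsHomogeneous 𝒮 I) :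
    setProd univ (I ⊓ 𝒮 1 : AddSubgroup S) = I :=
  le_antisymm (hI.univ_setProd_le fun _ ha => ha.1) (hI.le_univ_setProd_inf hmul hnes hIh)

theorem setProd_inf_univ_eq (hmul : IsGradedMul 𝒮) (hnes : IsNearlyEpsilonStrong 𝒮)
    (hI : IsTwoSidedIdeal I) (hIh : SetLike.IsHomogeneous 𝒮 I) :
    setProd (I ⊓ 𝒮 1 : AddSubgroup S) univ = I :=
  le_antisymm (hI.setProd_univ_le fun _ ha => ha.1) (hI.le_setProd_inf_univ hmul hnes hIh)

theorem SJS_inf_eq (hmul : IsGradedMul 𝒮) (hnes : IsNearlyEpsilonStrong 𝒮)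
    (hI : IsTwoSidedIdeal I) (hIh : SetLike.IsHomogeneous 𝒮 I) :
    SJS (I ⊓ 𝒮 1 : AddSubgroup S) = I := by
  refine le_antisymm (hI.SJS_le_of_subset fun _ ha => ha.1) ?_
  calc I ≤ setProd (I ⊓ 𝒮 1 : AddSubgroup S) univ := hI.le_setProd_inf_univ hmul hnes hIh
    _ ≤ _ := setProd_univ_le_SJS fun _ ha =>
      hI.le_univ_setProd_inf hmul hnes hIh ha.1

end IsTwoSidedIdeal

theorem isHomogeneous_SJS (hmul : IsGradedMul 𝒮) {J : Set S} (hJ : J ⊆ 𝒮 1) :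
    SetLike.IsHomogeneous 𝒮 (SJS J) := fun x _ ha =>
  SJS_le (K := (SJS J).comap (gradedProj 𝒮 x))
    (fun u _ hj t => mul_mul_mem_of_forall_homogeneous 𝒮
      (fun _ _ _ hu _ ht => gradedProj_mem_of_mem (hmul (hmul hu (hJ hj)) ht)
        fun _ => mul_mul_mem_SJS _ _ hj) u t) ha

theorem SJS_le_comap_gradedProj_one (hmul : IsGradedMul 𝒮) {J : AddSubgroup S}
    (hJ : (J : Set S) ⊆ 𝒮 1) (hinv : ∀ x, (gradedConj 𝒮 J x : Set S) ⊆ J) :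
    SJS (J : Set S) ≤ J.comap (gradedProj 𝒮 1) :=
  SJS_le fun u _ hj t => mul_mul_mem_of_forall_homogeneous 𝒮
    (fun y _ _ hu _ ht => gradedProj_mem_of_mem (hmul (hmul hu (hJ hj)) ht) fun hyz => by
      rw [mul_one] at hyz
      refine hinv y⁻¹ (mul_mem_setProd_s17 (mul_mem_setProd_s17 ?_ hj) ?_)
      · rwa [inv_inv]
      · rwa [inv_eq_of_mul_eq_one_right hyz]) u t

theorem SJS_inf_one_eq (hmul : IsGradedMul 𝒮) (hnes : IsNearlyEpsilonStrong 𝒮)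
    {J : AddSubgroup S} (hJ : IsIdealOfComponent (𝒮 1) J)
    (hinv : ∀ x, (gradedConj 𝒮 J x : Set S) ⊆ J) : SJS (J : Set S) ⊓ 𝒮 1 = J := by
  refine le_antisymm (fun a ha => ?_) fun j hj => ⟨hnes.subset_SJS hJ hj, hJ.1 hj⟩
  have := SJS_le_comap_gradedProj_one hmul hJ.1 hinv ha.1
  rwa [AddSubgroup.mem_comap, gradedProj_apply, decompose_of_mem_same 𝒮 ha.2] at this

end GradedIdeals

/-- Let `S` be nearly epsilon-strongly `G`-graded. The map `I ↦ I ∩ S_e` is a bijection from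
the set of graded (two-sided) ideals of `S` onto the set of `G`-invariant ideals of `S_e`,
with inverse `J ↦ SJS`. In particular, for any graded ideal `I` one has
`S(I ∩ S_e)S = S(I ∩ S_e) = (I ∩ S_e)S = I`. -/
theorem graded_ideal_bijection {G : Type*} [Group G] [DecidableEq G]
    {S : Type*} [NonUnitalRing S] (𝒮 : G → AddSubgroup S)
    [DirectSum.Decomposition 𝒮]
    (hmul : ∀ {x y : G} {a b : S}, a ∈ 𝒮 x → b ∈ 𝒮 y → a * b ∈ 𝒮 (x * y))
    (hnes : ∀ x : G, ∀ s ∈ 𝒮 x,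
      (∃ ε ∈ setProd (𝒮 x : Set S) (𝒮 x⁻¹ : Set S), ε * s = s) ∧
      (∃ ε' ∈ setProd (𝒮 x⁻¹ : Set S) (𝒮 x : Set S), s * ε' = s)) :
    (∀ I : AddSubgroup S, (∀ s : S, ∀ a ∈ I, s * a ∈ I ∧ a * s ∈ I) →
      (∀ a ∈ I, ∀ x : G, ((DirectSum.decompose 𝒮 a) x : S) ∈ I) →
      IsIdealOfComponent (𝒮 (1 : G)) (I ⊓ 𝒮 (1 : G)) ∧
      (∀ x : G, (gradedConj 𝒮 ((I ⊓ 𝒮 (1 : G) : AddSubgroup S) : Set S) x : Set S) ⊆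
        ((I ⊓ 𝒮 (1 : G) : AddSubgroup S) : Set S)) ∧
      SJS ((I ⊓ 𝒮 (1 : G) : AddSubgroup S) : Set S) = I ∧
      setProd (Set.univ : Set S) ((I ⊓ 𝒮 (1 : G) : AddSubgroup S) : Set S) = I ∧
      setProd ((I ⊓ 𝒮 (1 : G) : AddSubgroup S) : Set S) (Set.univ : Set S) = I) ∧
    (∀ J : AddSubgroup S, IsIdealOfComponent (𝒮 (1 : G)) J →
      (∀ x : G, (gradedConj 𝒮 (J : Set S) x : Set S) ⊆ (J : Set S)) →
      (∀ s : S, ∀ a ∈ SJS (J : Set S), s * a ∈ SJS (J : Set S) ∧ a * s ∈ SJS (J : Set S)) ∧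
      (∀ a ∈ SJS (J : Set S), ∀ x : G,
        ((DirectSum.decompose 𝒮 a) x : S) ∈ SJS (J : Set S)) ∧
      SJS (J : Set S) ⊓ 𝒮 (1 : G) = J) := by
  refine ⟨fun I (hI : IsTwoSidedIdeal I) hIh => ?_, fun J hJ hinv => ?_⟩
  · have hIh' : DirectSum.SetLike.IsHomogeneous 𝒮 I := fun x _ ha => hIh _ ha x
    exact ⟨hI.isIdealOfComponent_inf fun _ ha _ hb =>
      IsGradedMul.mul_mem_of_mul_eq hmul ha hb (one_mul 1),
      hI.gradedConj_inf_le hmul, hI.SJS_inf_eq hmul hnes hIh',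
      hI.univ_setProd_inf_eq hmul hnes hIh', hI.setProd_inf_univ_eq hmul hnes hIh'⟩
  · exact ⟨isTwoSidedIdeal_SJS _, fun a ha x => isHomogeneous_SJS hmul hJ.1 x ha,
      SJS_inf_one_eq hmul hnes hJ hinv⟩
end

section
/- Suppose G is an ordered group and S is an s-unital G-graded ring. If I is a graded ideal of S, then I is graded prime if and only if I is prime. -/
/-!
Prime ideals are in particular graded prime. Conversely, it suffices to show that `aSb ⊆ P`
forces `a ∈ P` or `b ∈ P`. For homogeneous `a` and `b` this is graded primality applied to the
graded ideals `SaS` and `SbS`, which contain `a` and `b` by `s`-unitality. In general, if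
`a, b ∉ P`, let `x` and `y` be the largest degrees with `aₓ, b_y ∉ P`. For `s` homogeneous of
degree `g`, the component of `a s b` of degree `x g y` is `aₓ s b_y` modulo `P`: any other pair
`(u, v)` with `u g v = x g y` has `u > x` or `v > y`, since the order is bi-invariant, so
`a_u ∈ P` or `b_v ∈ P`. Hence `aₓ S b_y ⊆ P`, contradicting the homogeneous case.
-/

open Pointwise

/-- `I` is a two-sided ideal of the ring `S`. -/
def IsRingIdeal {S : Type*} [NonUnitalRing S] (I : AddSubgroup S) : Prop :=
  ∀ s : S, ∀ a ∈ I, s * a ∈ I ∧ a * s ∈ I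

section Ring

variable {S : Type*} [NonUnitalRing S]

theorem setProd_le_iff {U V : Set S} {I : AddSubgroup S} :
    setProd U V ≤ I ↔ ∀ u ∈ U, ∀ v ∈ V, u * v ∈ I := by
  rw [setProd, AddSubgroup.closure_le, Set.mul_subset_iff]
  rfl

theorem setProd_closure_le {X Y : Set S} {I : AddSubgroup S}
    (h : ∀ x ∈ X, ∀ y ∈ Y, x * y ∈ I) :
    setProd (AddSubgroup.closure X : Set S) (AddSubgroup.closure Y) ≤ I := by
  refine setProd_le_iff.2 fun c hc d hd => ?_
  have hX : ∀ x ∈ X, x * d ∈ I := fun x hx =>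
    (AddSubgroup.closure_le (K := I.comap (AddMonoidHom.mulLeft x))).2 (h x hx) hd
  exact (AddSubgroup.closure_le (K := I.comap (AddMonoidHom.mulRight d))).2 hX hc

theorem isRingIdeal_closure {X : Set S} (h : ∀ s, ∀ x ∈ X, s * x ∈ X ∧ x * s ∈ X) :
    IsRingIdeal (AddSubgroup.closure X) := fun s _ hc =>
  ⟨(AddSubgroup.closure_le (K := (AddSubgroup.closure X).comap (AddMonoidHom.mulLeft s))).2
      (fun x hx => AddSubgroup.subset_closure (h s x hx).1) hc,
    (AddSubgroup.closure_le (K := (AddSubgroup.closure X).comap (AddMonoidHom.mulRight s))).2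
      (fun x hx => AddSubgroup.subset_closure (h s x hx).2) hc⟩

theorem le_or_le_of_forall_mul_mul_mem {A B I : AddSubgroup S} (hA : IsRingIdeal A)
    (hAB : setProd (A : Set S) B ≤ I) (hI : ∀ a b, (∀ s, a * s * b ∈ I) → a ∈ I ∨ b ∈ I) :
    A ≤ I ∨ B ≤ I := by
  by_contra! ⟨hAI, hBI⟩
  obtain ⟨a, haA, haI⟩ := SetLike.not_le_iff_exists.1 hAI
  obtain ⟨b, hbB, hbI⟩ := SetLike.not_le_iff_exists.1 hBI
  exact (hI a b fun s => setProd_le_iff.1 hAB _ (hA s a haA).2 b hbB).elim haI hbI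

def sandwichSpan (a : S) : AddSubgroup S :=
  AddSubgroup.closure (Set.range fun p : S × S => p.1 * a * p.2)

theorem isRingIdeal_sandwichSpan (a : S) : IsRingIdeal (sandwichSpan a) := by
  refine isRingIdeal_closure ?_
  rintro s _ ⟨⟨u, v⟩, rfl⟩
  exact ⟨⟨(s * u, v), by simp only [mul_assoc]⟩, ⟨(u, v * s), by simp only [mul_assoc]⟩⟩

theorem mem_sandwichSpan_self {a : S}
    (ha : a ∈ setProd {a} Set.univ ∧ a ∈ setProd Set.univ {a}) : a ∈ sandwichSpan a := by
  have hright : ∀ t, a * t ∈ sandwichSpan a := fun t =>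
    setProd_le_iff (I := (sandwichSpan a).comap (AddMonoidHom.mulRight t)) |>.2
      (by rintro u - _ rfl; exact AddSubgroup.subset_closure ⟨(u, t), rfl⟩) ha.2
  exact setProd_le_iff.2 (by rintro _ rfl t -; exact hright t) ha.1

theorem setProd_sandwichSpan_le {I : AddSubgroup S} (hI : IsRingIdeal I) {a b : S}
    (hab : ∀ s, a * s * b ∈ I) : setProd (sandwichSpan a : Set S) (sandwichSpan b) ≤ I := by
  refine setProd_closure_le ?_
  rintro _ ⟨⟨u, v⟩, rfl⟩ _ ⟨⟨w, t⟩, rfl⟩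
  have : u * a * v * (w * b * t) = u * (a * (v * w) * b) * t := by simp only [mul_assoc]
  rw [this]
  exact (hI t _ (hI u _ (hab (v * w))).1).2

end Ring

section Order

variable {G : Type*} [Group G] [LinearOrder G] [MulLeftMono G] [MulRightMono G]

theorem mul_mul_ne_of_le_of_le {u x v y : G} (hu : u ≤ x) (hv : v ≤ y) (h : (u, v) ≠ (x, y))
    (g : G) : u * g * v ≠ x * g * y := by
  rcases hu.lt_or_eq with hu | rfl
  · exact (mul_lt_mul_of_lt_of_le (mul_lt_mul_left hu g) hv).ne
  · rcases hv.lt_or_eq with hv | rfl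
    · exact (mul_lt_mul_right hv _).ne
    · exact absurd rfl h

end Order

section Graded

open DirectSum

variable {S : Type*} [NonUnitalRing S] {G : Type*} [DecidableEq G]
  (𝒮 : G → AddSubgroup S) [Decomposition 𝒮]

theorem isHomogeneous_closure {X : Set S}
    (h : ∀ x ∈ X, ∀ i, (decompose 𝒮 x i : S) ∈ AddSubgroup.closure X) :
    SetLike.IsHomogeneous 𝒮 (AddSubgroup.closure X) := fun i _ hc => by
  induction hc using AddSubgroup.closure_induction with
  | mem x hx => exact h x hx i
  | zero => simp
  | add x y _ _ hx hy => simpa using add_mem hx hy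
  | neg x _ hx =>
    rw [decompose_neg]
    exact neg_mem hx

theorem coe_decompose_mem_of_mem {A : AddSubgroup S} {a : S} {i : G} (ha : a ∈ 𝒮 i)
    (haA : a ∈ A) (j : G) : (decompose 𝒮 a j : S) ∈ A := by
  by_cases hij : i = j
  · rwa [← hij, decompose_of_mem_same 𝒮 ha]
  · rw [decompose_of_mem_ne 𝒮 ha hij]
    exact zero_mem A

variable [Group G] (hmul : ∀ {x y : G} {a b : S}, a ∈ 𝒮 x → b ∈ 𝒮 y → a * b ∈ 𝒮 (x * y))
include hmul

theorem isHomogeneous_sandwichSpan {a : S} {x : G} (ha : a ∈ 𝒮 x) :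
    SetLike.IsHomogeneous 𝒮 (sandwichSpan a) := by
  refine isHomogeneous_closure 𝒮 ?_
  rintro _ ⟨⟨u, v⟩, rfl⟩ i
  induction u using Decomposition.inductionOn 𝒮 with
  | zero => simp
  | add u u' hu hu' => simpa [add_mul] using add_mem hu hu'
  | homogeneous u =>
    induction v using Decomposition.inductionOn 𝒮 with
    | zero => simp
    | add v v' hv hv' => simpa [mul_add] using add_mem hv hv'
    | homogeneous v =>
      exact coe_decompose_mem_of_mem 𝒮 (hmul (hmul u.2 ha) v.2)
        (AddSubgroup.subset_closure (Set.mem_range_self ((u : S), (v : S)))) i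

theorem mem_or_mem_of_homogeneous {I : AddSubgroup S} (hI : IsRingIdeal I)
    (hsu : ∀ s : S, s ∈ setProd {s} Set.univ ∧ s ∈ setProd Set.univ {s})
    (hprime : ∀ A B : AddSubgroup S, IsRingIdeal A → IsRingIdeal B →
      SetLike.IsHomogeneous 𝒮 A → SetLike.IsHomogeneous 𝒮 B →
      setProd (A : Set S) B ≤ I → A ≤ I ∨ B ≤ I)
    {a b : S} {x y : G} (ha : a ∈ 𝒮 x) (hb : b ∈ 𝒮 y) (hab : ∀ s, a * s * b ∈ I) :
    a ∈ I ∨ b ∈ I :=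
  (hprime _ _ (isRingIdeal_sandwichSpan a) (isRingIdeal_sandwichSpan b)
      (isHomogeneous_sandwichSpan 𝒮 hmul ha) (isHomogeneous_sandwichSpan 𝒮 hmul hb)
      (setProd_sandwichSpan_le hI hab)).imp
    (fun h => h (mem_sandwichSpan_self (hsu a))) (fun h => h (mem_sandwichSpan_self (hsu b)))

end Graded

section Ordered

open DirectSum

variable {S : Type*} [NonUnitalRing S] {G : Type*} [LinearOrder G] [DecidableEq G]
  (𝒮 : G → AddSubgroup S) [Decomposition 𝒮]

theorem exists_isGreatest_decompose_notMem {P : AddSubgroup S}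
    (hP : SetLike.IsHomogeneous 𝒮 P) {a : S} (ha : a ∉ P) :
    ∃ x, IsGreatest {u | (decompose 𝒮 a u : S) ∉ P} x := by
  classical
  have hfin : {u | (decompose 𝒮 a u : S) ∉ P}.Finite :=
    (decompose 𝒮 a).support.finite_toSet.subset fun u hu =>
      DFinsupp.mem_support_iff.2 fun h0 => hu (by simp [h0])
  have hne : {u | (decompose 𝒮 a u : S) ∉ P}.Nonempty :=
    not_forall.1 fun h => ha ((AddSubmonoidClass.IsHomogeneous.mem_iff 𝒮 P hP).2 h)
  obtain ⟨x, hx, hmax⟩ := Set.exists_max_image _ id hfin hne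
  exact ⟨x, hx, hmax⟩

variable [Group G] [MulLeftMono G] [MulRightMono G]
  (hmul : ∀ {x y : G} {a b : S}, a ∈ 𝒮 x → b ∈ 𝒮 y → a * b ∈ 𝒮 (x * y))
include hmul

theorem coe_decompose_mul_mul_mem_of_isGreatest {P : AddSubgroup S} (hP : IsRingIdeal P)
    (hPh : SetLike.IsHomogeneous 𝒮 P) {a b : S} (hab : ∀ s, a * s * b ∈ P) {x y : G}
    (hx : IsGreatest {u | (decompose 𝒮 a u : S) ∉ P} x)
    (hy : IsGreatest {v | (decompose 𝒮 b v : S) ∉ P} y) (s : S) :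
    (decompose 𝒮 a x : S) * s * (decompose 𝒮 b y : S) ∈ P := by
  classical
  induction s using Decomposition.inductionOn 𝒮 with
  | zero => simp
  | add s s' hs hs' => simpa [mul_add, add_mul] using add_mem hs hs'
  | @homogeneous g s =>
    set Fa := (decompose 𝒮 a).support
    set Fb := (decompose 𝒮 b).support
    let term (p : G × G) : S :=
      decompose 𝒮 ((decompose 𝒮 a p.1 : S) * s * (decompose 𝒮 b p.2 : S)) (x * g * y)
    have hexpand : (decompose 𝒮 (a * s * b) (x * g * y) : S) = ∑ p ∈ Fa ×ˢ Fb, term p := by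
      conv_lhs => rw [← sum_support_decompose 𝒮 a, ← sum_support_decompose 𝒮 b]
      rw [Finset.sum_mul, Finset.sum_mul_sum, ← Finset.sum_product', decompose_sum]
      simp [term, Fa, Fb]
    have hrest : ∀ p ∈ (Fa ×ˢ Fb).erase (x, y), term p ∈ P := by
      rintro ⟨u, v⟩ hp
      by_cases hu : (decompose 𝒮 a u : S) ∈ P
      · exact hPh _ (hP _ _ (hP s _ hu).2).2
      by_cases hv : (decompose 𝒮 b v : S) ∈ P
      · exact hPh _ (hP _ _ hv).1
      rw [show term (u, v) = 0 from decompose_of_mem_ne 𝒮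
        (hmul (hmul (SetLike.coe_mem _) s.2) (SetLike.coe_mem _))
        (mul_mul_ne_of_le_of_le (hx.2 hu) (hy.2 hv) (Finset.ne_of_mem_erase hp) g)]
      exact zero_mem P
    have htop : term (x, y) = (decompose 𝒮 a x : S) * s * (decompose 𝒮 b y : S) :=
      decompose_of_mem_same 𝒮 (hmul (hmul (SetLike.coe_mem _) s.2) (SetLike.coe_mem _))
    have hxy : (x, y) ∈ Fa ×ˢ Fb := Finset.mem_product.2
      ⟨DFinsupp.mem_support_iff.2 fun h0 => hx.1 (by simp [h0]),
        DFinsupp.mem_support_iff.2 fun h0 => hy.1 (by simp [h0])⟩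
    rw [← Finset.add_sum_erase _ _ hxy, htop] at hexpand
    exact (add_mem_cancel_right (sum_mem hrest)).1 (hexpand ▸ hPh _ (hab s))

theorem mem_or_mem_of_forall_mul_mul_mem {P : AddSubgroup S} (hP : IsRingIdeal P)
    (hPh : SetLike.IsHomogeneous 𝒮 P)
    (hhom : ∀ {x y : G} {a b : S}, a ∈ 𝒮 x → b ∈ 𝒮 y → (∀ s, a * s * b ∈ P) → a ∈ P ∨ b ∈ P)
    {a b : S} (hab : ∀ s, a * s * b ∈ P) : a ∈ P ∨ b ∈ P := by
  by_contra! ⟨ha, hb⟩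
  obtain ⟨x, hx⟩ := exists_isGreatest_decompose_notMem 𝒮 hPh ha
  obtain ⟨y, hy⟩ := exists_isGreatest_decompose_notMem 𝒮 hPh hb
  exact (hhom (SetLike.coe_mem _) (SetLike.coe_mem _)
    (coe_decompose_mul_mul_mem_of_isGreatest 𝒮 hmul hP hPh hab hx hy)).elim hx.1 hy.1

end Ordered

/-- Suppose `G` is an ordered group (a group with a total order such that `a ≤ b` implies
`x * a * y ≤ x * b * y`) and `S` is an `s`-unital `G`-graded ring. If `I` is a graded
(two-sided) ideal of `S`, then `I` is graded prime if and only if `I` is prime. -/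
theorem graded_prime_iff_prime {G : Type*} [Group G] [DecidableEq G] [LinearOrder G]
    [CovariantClass G G (· * ·) (· ≤ ·)]
    [CovariantClass G G (Function.swap (· * ·)) (· ≤ ·)]
    {S : Type*} [NonUnitalRing S] (𝒮 : G → AddSubgroup S)
    [DirectSum.Decomposition 𝒮]
    (hmul : ∀ {x y : G} {a b : S}, a ∈ 𝒮 x → b ∈ 𝒮 y → a * b ∈ 𝒮 (x * y))
    (hsu : ∀ s : S, s ∈ setProd {s} (Set.univ : Set S) ∧
        s ∈ setProd (Set.univ : Set S) {s})
    (I : AddSubgroup S) (hI : IsRingIdeal I)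
    (hgr : ∀ a ∈ I, ∀ x : G, ((DirectSum.decompose 𝒮 a) x : S) ∈ I) :
    (I ≠ ⊤ ∧ ∀ A B : AddSubgroup S, IsRingIdeal A → IsRingIdeal B →
        (∀ a ∈ A, ∀ x : G, ((DirectSum.decompose 𝒮 a) x : S) ∈ A) →
        (∀ b ∈ B, ∀ x : G, ((DirectSum.decompose 𝒮 b) x : S) ∈ B) →
        setProd (A : Set S) (B : Set S) ≤ I → A ≤ I ∨ B ≤ I) ↔
    (I ≠ ⊤ ∧ ∀ A B : AddSubgroup S, IsRingIdeal A → IsRingIdeal B →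
        setProd (A : Set S) (B : Set S) ≤ I → A ≤ I ∨ B ≤ I) := by
  constructor
  · rintro ⟨hne, hgp⟩
    refine ⟨hne, fun A B hA _ hAB => le_or_le_of_forall_mul_mul_mem hA hAB fun a b => ?_⟩
    exact mem_or_mem_of_forall_mul_mul_mem 𝒮 hmul hI (fun x a ha => hgr a ha x)
      (mem_or_mem_of_homogeneous 𝒮 hmul hI hsu fun A B hA hB hAh hBh =>
        hgp A B hA hB (fun a ha x => hAh x ha) (fun b hb x => hBh x hb))
  · rintro ⟨hne, hp⟩
    exact ⟨hne, fun A B hA hB _ _ => hp A B hA hB⟩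
end
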